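/- Fix an integer D ≥ 2 and let M_3(n,D) denote the maximum size of a mutually uncorrelated D-GC-prefix-balanced set of words of length n over the four-letter DNA alphabet {A,T,G,C}. Then liminf_{m→∞} M_3(2m+1, D)^{1/(2m+1)} ≥ 2·cos(π/(D+1)); in particular M_3(n,D) grows exponentially in n along odd n. -/

import Mathlib

/-!
Let `p = 1 (10)^m`, of length `2m+1`. Its prefix running digital sums stay in `{0, 1, 2}`,
and every nonempty prefix of `p` has more ones than zeros while no proper suffix does, so `p`
is self-uncorrelated. Hence the `2 ^ (2m+1)` DNA words whose GC/AT-pattern is `p` (a free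
choice of `G`/`C` or `A`/`T` at each position) form a mutually uncorrelated `2`-GCPB code,
and `M₃(2m+1, D) ≥ 2 ^ (2m+1)` for `D ≥ 2`. With the trivial bound `M₃(n, D) ≤ 4 ^ n`,
which keeps the real `liminf` from taking its junk value, the `(2m+1)`-th roots have
`liminf ≥ 2 ≥ 2 cos (π/(D+1))`.
-/

/-- The four-letter DNA alphabet. -/
inductive DNA | A | T | G | C
deriving DecidableEq

/-- Hamming distance between two words (of equal length) given as lists. -/
def hammingD {α : Type*} [DecidableEq α] (x y : List α) : ℕ :=
  (x.zip y).countP (fun p => decide (p.1 ≠ p.2))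

/-- A binary word has `D`-bounded running digital sum if in every prefix the
numbers of ones and zeros differ by at most `D`. -/
def brds (D : ℕ) (w : List Bool) : Prop :=
  ∀ k ≤ w.length,
    (((w.take k).count true : ℤ) - ((w.take k).count false : ℤ)).natAbs ≤ D

/-- The letters `G`, `C` of the DNA alphabet. -/
def isGC : DNA → Bool
  | DNA.G => true
  | DNA.C => true
  | _ => false

/-- A DNA word is `D`-GC-prefix-balanced if in every prefix the number of
letters from {G,C} and the number of letters from {A,T} differ by at most `D`. -/
def gcpb (D : ℕ) (w : List DNA) : Prop :=
  ∀ k ≤ w.length,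
    (((w.take k).countP isGC : ℤ) - ((w.take k).countP (fun c => !(isGC c)) : ℤ)).natAbs ≤ D

/-- A word is self-uncorrelated if no proper nonempty prefix equals the suffix
of the same length. -/
def selfUncorr {α : Type*} (w : List α) : Prop :=
  ∀ k, 1 ≤ k → k ≤ w.length - 1 → w.take k ≠ w.drop (w.length - k)

/-- A set of words is mutually uncorrelated if every word is self-uncorrelated
and for every ordered pair of distinct words `x`, `y` no nonempty prefix of `y`
equals a suffix of `x` of the same length. -/
def mutUncorr {α : Type*} (S : Set (List α)) : Prop :=
  (∀ w ∈ S, selfUncorr w) ∧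
  ∀ x ∈ S, ∀ y ∈ S, x ≠ y →
    ∀ k, 1 ≤ k → k ≤ x.length → y.take k ≠ x.drop (x.length - k)

/-- A Dyck word: equal numbers of ones and zeros, and every prefix has at least
as many ones as zeros. -/
def isDyck (w : List Bool) : Prop :=
  w.count true = w.count false ∧
  ∀ k ≤ w.length, (w.take k).count false ≤ (w.take k).count true

/-- The height of a (Dyck) word is at most `D`: in every prefix the number of
ones exceeds the number of zeros by at most `D`. -/
def heightLe (D : ℕ) (w : List Bool) : Prop :=
  ∀ k ≤ w.length, ((w.take k).count true : ℤ) - ((w.take k).count false : ℤ) ≤ (D : ℤ)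

/-- `M₃ n D`: the maximum size of a mutually uncorrelated `D`-GCPB set of DNA
words of length `n`. -/
noncomputable def M3 (n D : ℕ) : ℕ :=
  sSup {M : ℕ | ∃ C : Finset (List DNA), C.card = M ∧
    (∀ w ∈ C, w.length = n) ∧ (∀ w ∈ C, gcpb D w) ∧
    mutUncorr (C : Set (List DNA))}

instance : Fintype DNA :=
  ⟨{DNA.A, DNA.T, DNA.G, DNA.C}, by intro x; cases x <;> simp⟩

def rds (w : List Bool) : ℤ := (w.count true : ℤ) - w.count false

@[simp] lemma rds_nil : rds [] = 0 := rfl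

@[simp] lemma rds_cons (b : Bool) (w : List Bool) :
    rds (b :: w) = (if b then 1 else -1) + rds w := by
  cases b <;> simp [rds] <;> ring

lemma rds_append (u v : List Bool) : rds (u ++ v) = rds u + rds v := by
  simp only [rds, List.count_append]; push_cast; ring

lemma brds_mono {D D' : ℕ} (h : D ≤ D') {w : List Bool} (hw : brds D w) : brds D' w :=
  fun k hk => (hw k hk).trans h

lemma gcpb_iff_brds_map (D : ℕ) (w : List DNA) : gcpb D w ↔ brds D (w.map isGC) := by
  simp only [gcpb, brds, List.length_map, ← List.map_take, List.count, List.countP_map]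
  simp [Function.comp_def]

lemma mutUncorr_of_map_eq {α β : Type*} {f : α → β} {p : List β} (hp : selfUncorr p)
    {S : Set (List α)} (hS : ∀ w ∈ S, w.map f = p) : mutUncorr S := by
  have hlen : ∀ w ∈ S, w.length = p.length := fun w hw => by rw [← hS w hw, List.length_map]
  have key : ∀ x ∈ S, ∀ y ∈ S, ∀ k, 1 ≤ k → k ≤ p.length - 1 →
      y.take k ≠ x.drop (x.length - k) := fun x hx y hy k hk1 hk2 h => by
    have hmap := congrArg (List.map f) h
    rw [List.map_take, List.map_drop, hS y hy, hS x hx, hlen x hx] at hmap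
    exact hp k hk1 hk2 hmap
  refine ⟨fun w hw k hk1 hk2 => key w hw w hw k hk1 (hlen w hw ▸ hk2), ?_⟩
  intro x hx y hy hxy k hk1 hk2
  rcases Nat.lt_or_eq_of_le hk2 with hk | rfl
  · exact key x hx y hy k hk1 (by rw [← hlen x hx]; omega)
  · rw [List.take_of_length_le (by rw [hlen y hy, hlen x hx]), Nat.sub_self, List.drop_zero]
    exact Ne.symm hxy

lemma card_le_pow_of_forall_length_eq {α : Type*} [Fintype α] {n : ℕ} {C : Finset (List α)}
    (hC : ∀ w ∈ C, w.length = n) : C.card ≤ Fintype.card α ^ n := by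
  classical
  have hsub : C ⊆ Finset.univ.image (fun v : List.Vector α n => v.toList) :=
    fun w hw => Finset.mem_image.2 ⟨⟨w, hC w hw⟩, Finset.mem_univ _, rfl⟩
  calc C.card ≤ _ := Finset.card_le_card hsub
    _ ≤ Fintype.card (List.Vector α n) := Finset.card_image_le
    _ = Fintype.card α ^ n := card_vector n

lemma card_isGC_fiber (b : Bool) : (Finset.univ.filter fun d : DNA => isGC d = b).card = 2 := by
  cases b <;> rfl

lemma exists_finset_map_isGC_eq (p : List Bool) :
    ∃ C : Finset (List DNA), C.card = 2 ^ p.length ∧ ∀ w ∈ C, w.map isGC = p := by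
  refine ⟨(Fintype.piFinset fun i : Fin p.length =>
      Finset.univ.filter fun d : DNA => isGC d = p[i]).image List.ofFn, ?_, ?_⟩
  · rw [Finset.card_image_of_injective _ List.ofFn_injective, Fintype.card_piFinset]
    simp [card_isGC_fiber]
  · simp only [Finset.mem_image, Fintype.mem_piFinset, Finset.mem_filter, Finset.mem_univ,
      true_and]
    rintro _ ⟨v, hv, rfl⟩
    simp [List.map_ofFn, Function.comp_def, hv]

def tfRep : ℕ → List Bool
  | 0 => []
  | m + 1 => true :: false :: tfRep m

def gcPattern (m : ℕ) : List Bool := true :: tfRep m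

lemma length_tfRep (m : ℕ) : (tfRep m).length = 2 * m := by
  induction m with
  | zero => rfl
  | succ m ih => simp [tfRep, ih]; ring

lemma length_gcPattern (m : ℕ) : (gcPattern m).length = 2 * m + 1 := by
  simp [gcPattern, length_tfRep]

lemma rds_tfRep (m : ℕ) : rds (tfRep m) = 0 := by
  induction m with
  | zero => rfl
  | succ m ih => simp [tfRep, ih]

lemma rds_take_tfRep (m j : ℕ) :
    0 ≤ rds ((tfRep m).take j) ∧ rds ((tfRep m).take j) ≤ 1 := by
  induction m generalizing j with
  | zero => simp [tfRep]
  | succ m ih =>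
    match j with
    | 0 => simp
    | 1 => simp [tfRep]
    | j + 2 => simpa [tfRep] using ih j

lemma rds_drop_tfRep (m j : ℕ) :
    -1 ≤ rds ((tfRep m).drop j) ∧ rds ((tfRep m).drop j) ≤ 0 := by
  have hsplit := rds_append ((tfRep m).take j) ((tfRep m).drop j)
  rw [List.take_append_drop, rds_tfRep] at hsplit
  have := rds_take_tfRep m j
  constructor <;> linarith

lemma brds_gcPattern (m : ℕ) : brds 2 (gcPattern m) := by
  rintro (_ | k) -
  · simp
  · have := rds_take_tfRep m k
    change (rds (true :: (tfRep m).take k)).natAbs ≤ 2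
    rw [rds_cons, if_pos rfl]
    omega

lemma selfUncorr_gcPattern (m : ℕ) : selfUncorr (gcPattern m) := by
  rintro (_ | k) hk1 hk2 h
  · omega
  · rw [length_gcPattern] at hk2
    have hrds := congrArg rds h
    have hdrop : 2 * m + 1 - (k + 1) = (2 * m - (k + 1)) + 1 := by omega
    simp only [gcPattern, List.take_succ_cons, List.length_cons, length_tfRep, hdrop,
      List.drop_succ_cons, rds_cons, if_pos] at hrds
    have := rds_take_tfRep m k
    have := rds_drop_tfRep m (2 * m - (k + 1))
    omega

lemma M3_le_four_pow (n D : ℕ) : M3 n D ≤ 4 ^ n :=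
  csSup_le' <| by
    rintro _ ⟨C, rfl, hlen, -⟩
    exact card_le_pow_of_forall_length_eq hlen

lemma card_le_M3 {n D : ℕ} {C : Finset (List DNA)} (hlen : ∀ w ∈ C, w.length = n)
    (hgc : ∀ w ∈ C, gcpb D w) (hC : mutUncorr (C : Set (List DNA))) : C.card ≤ M3 n D :=
  le_csSup ⟨4 ^ n, by
    rintro _ ⟨C', rfl, hlen', -⟩; exact card_le_pow_of_forall_length_eq hlen'⟩
    ⟨C, rfl, hlen, hgc, hC⟩

lemma two_pow_le_M3 {D : ℕ} (hD : 2 ≤ D) (m : ℕ) : 2 ^ (2 * m + 1) ≤ M3 (2 * m + 1) D := by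
  obtain ⟨C, hcard, hC⟩ := exists_finset_map_isGC_eq (gcPattern m)
  rw [length_gcPattern] at hcard
  rw [← hcard]
  refine card_le_M3 (fun w hw => ?_) (fun w hw => ?_)
    (mutUncorr_of_map_eq (selfUncorr_gcPattern m) hC)
  · rw [← length_gcPattern m, ← hC w hw, List.length_map]
  · rw [gcpb_iff_brds_map, hC w hw]
    exact brds_mono hD (brds_gcPattern m)

/-- for fixed `D ≥ 2`,
`liminf_{m→∞} M₃(2m+1, D)^{1/(2m+1)} ≥ 2 cos(π/(D+1))`. -/
theorem stmt11 (D : ℕ) (hD : 2 ≤ D) :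
    2 * Real.cos (Real.pi / ((D : ℝ) + 1)) ≤
      Filter.liminf
        (fun m : ℕ => (M3 (2 * m + 1) D : ℝ) ^ ((1 : ℝ) / (2 * (m : ℝ) + 1)))
        Filter.atTop := by
  have hpow : ∀ (x : ℝ) (m : ℕ), x ^ (2 * (m : ℝ) + 1) = x ^ (2 * m + 1) := fun x m => by
    exact_mod_cast Real.rpow_natCast x (2 * m + 1)
  have lower : ∀ m : ℕ, 2 ≤ (M3 (2 * m + 1) D : ℝ) ^ ((1 : ℝ) / (2 * (m : ℝ) + 1)) := by
    intro m
    rw [one_div, Real.le_rpow_inv_iff_of_pos (by norm_num) (by positivity) (by positivity), hpow]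
    exact_mod_cast two_pow_le_M3 hD m
  have upper : ∀ m : ℕ, (M3 (2 * m + 1) D : ℝ) ^ ((1 : ℝ) / (2 * (m : ℝ) + 1)) ≤ 4 := by
    intro m
    rw [one_div, Real.rpow_inv_le_iff_of_pos (by positivity) (by norm_num) (by positivity), hpow]
    exact_mod_cast M3_le_four_pow (2 * m + 1) D
  calc 2 * Real.cos (Real.pi / ((D : ℝ) + 1)) ≤ 2 := by
        linarith [Real.cos_le_one (Real.pi / (D + 1))]
    _ ≤ _ := Filter.le_liminf_of_le (Filter.isBoundedUnder_of ⟨4, upper⟩).isCobounded_flip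
        (Filter.Eventually.of_forall lower)
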